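/- Let p_u(x) = ∑_{k=0}^{n−1} φ_k(x)² and τ_n(x) = √(n/2) φ_{n−1}(x) · (1/2)∫_ℝ sign(x−t) φ_n(t) dt. Then 2τ_n'''(x) + 2(2n − 1 − x²) τ_n'(x) − 4x τ_n(x) = (12n − 1 − 6x²) p_u'(x) + 6x p_u(x) for all real x. -/

import Mathlib

/-!
The Hermite functions satisfy the ladder relations `φₖ' = x φₖ - √(2(k+1)) φₖ₊₁` and
`φₖ₊₁' = -x φₖ₊₁ + √(2(k+1)) φₖ`. Write `f = φₙ₋₁`, `g = φₙ`, `a = √(2n)` and `τ = c f ε` with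
`ε' = g`. Since `(2n - 1 - x²)' = -2x`, the left-hand side is `2 (τ'' + (2n - 1 - x²) τ)'`, and
because `f` solves Hermite's equation `f'' = (x² + 1 - 2n) f`, the sign integral `ε` drops out of
`τ'' + (2n - 1 - x²) τ = c (2 f' g + f g')`. Both sides thus become quadratic forms in `f, g`,
which agree by the Christoffel–Darboux formula `p = n (f² + g²) - a x f g`, `p' = -a f g`.
-/

open Real MeasureTheory

/-- Physicists' Hermite polynomial `H n x = (-1)^n e^{x^2} (d/dx)^n e^{-x^2}`. -/
noncomputable def physHermite (n : ℕ) (x : ℝ) : ℝ :=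
  (-1)^n * Real.exp (x^2) * iteratedDeriv n (fun y => Real.exp (-y^2)) x

/-- Hermite function `φ k x = (2^k k! √π)^{-1/2} H_k(x) e^{-x²/2}`. -/
noncomputable def hermiteFn (k : ℕ) (x : ℝ) : ℝ :=
  (Real.sqrt (2^k * k.factorial * Real.sqrt Real.pi))⁻¹ * physHermite k x * Real.exp (-x^2/2)

/-- Confluent hypergeometric function `₁F₁(-k; b; x)` with nonpositive integer first
parameter `-k`; it is the polynomial `∑_{j=0}^{k} ((-k)_j/(b)_j) x^j/j!`, where the rising
factorial `(-k)_j = (-1)^j k!/(k-j)!`. -/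
noncomputable def oneF1neg (k : ℕ) (b x : ℝ) : ℝ :=
  ∑ j ∈ Finset.range (k+1),
    ((-1)^j * (k.descFactorial j : ℝ) / ∏ i ∈ Finset.range j, (b + i)) * x^j / (j.factorial : ℝ)

/-- GUE mean density at σ² = 1/2: partial sum of squared Hermite functions. -/
noncomputable def pGUE (n : ℕ) (x : ℝ) : ℝ := ∑ k ∈ Finset.range n, hermiteFn k x ^ 2

/-- GUE mean density with general variance σ². -/
noncomputable def pGUEvar (n : ℕ) (σ x : ℝ) : ℝ :=
  (σ * Real.sqrt 2)⁻¹ * pGUE n (x / (σ * Real.sqrt 2))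

/-- The function τₙ from the GSE/GOE densities. -/
noncomputable def tauFn (n : ℕ) (x : ℝ) : ℝ :=
  Real.sqrt (n/2) * hermiteFn (n-1) x *
    ((1/2) * ∫ t : ℝ, Real.sign (x - t) * hermiteFn n t)

/-- The function αₙ (for odd n) from the GOE density. -/
noncomputable def alphaFn (n : ℕ) (x : ℝ) : ℝ :=
  hermiteFn (n-1) x / ∫ t : ℝ, hermiteFn (n-1) t

open Polynomial

noncomputable def physHermitePoly : ℕ → ℝ[X]
  | 0 => 1
  | n + 1 => 2 * X * physHermitePoly n - derivative (physHermitePoly n)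

lemma eval_physHermitePoly_succ (n : ℕ) (x : ℝ) :
    (physHermitePoly (n + 1)).eval x
      = 2 * x * (physHermitePoly n).eval x - (derivative (physHermitePoly n)).eval x := by
  simp [physHermitePoly]

lemma iteratedDeriv_exp_neg_sq (n : ℕ) (x : ℝ) :
    iteratedDeriv n (fun y => exp (-y ^ 2)) x
      = (-1) ^ n * (physHermitePoly n).eval x * exp (-x ^ 2) := by
  induction n generalizing x with
  | zero => simp [physHermitePoly]
  | succ n ih =>
    rw [iteratedDeriv_succ, funext ih]
    have hsq : HasDerivAt (fun y : ℝ => -y ^ 2) (-(2 * x)) x :=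
      (hasDerivAt_pow 2 x).neg.congr_deriv (by push_cast; ring)
    have hexp := hsq.exp
    rw [(((physHermitePoly n).hasDerivAt x).const_mul ((-1) ^ n)).fun_mul hexp |>.deriv,
      eval_physHermitePoly_succ]
    ring

lemma physHermite_eq_eval (n : ℕ) (x : ℝ) : physHermite n x = (physHermitePoly n).eval x := by
  rw [physHermite, iteratedDeriv_exp_neg_sq]
  calc (-1) ^ n * exp (x ^ 2) * ((-1) ^ n * (physHermitePoly n).eval x * exp (-x ^ 2))
      = ((-1) ^ n) ^ 2 * (exp (x ^ 2) * exp (-x ^ 2)) * (physHermitePoly n).eval x := by ring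
    _ = (physHermitePoly n).eval x := by rw [← exp_add]; simp [← pow_mul]

lemma derivative_physHermitePoly_succ (n : ℕ) :
    derivative (physHermitePoly (n + 1)) = 2 * (n + 1) * physHermitePoly n := by
  induction n with
  | zero => simp [physHermitePoly]
  | succ n ih =>
    rw [physHermitePoly, derivative_sub, derivative_mul, ih, physHermitePoly]
    simp only [derivative_mul, derivative_add, derivative_ofNat, derivative_X, derivative_natCast,
      derivative_one]
    push_cast
    ring

noncomputable def hermiteNorm (k : ℕ) : ℝ := (√(2 ^ k * k.factorial * √π))⁻¹

lemma hermiteFn_eq (k : ℕ) (x : ℝ) :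
    hermiteFn k x = hermiteNorm k * (physHermitePoly k).eval x * exp (-x ^ 2 / 2) := by
  rw [hermiteFn, physHermite_eq_eval, hermiteNorm]

lemma sqrt_mul_hermiteNorm_succ (k : ℕ) :
    √(2 * (k + 1)) * hermiteNorm (k + 1) = hermiteNorm k := by
  have hfac : (2 : ℝ) ^ (k + 1) * (k + 1).factorial * √π
      = 2 * (k + 1) * (2 ^ k * k.factorial * √π) := by
    push_cast [Nat.factorial_succ]; ring
  have hpos : 0 < √(2 * ((k : ℝ) + 1)) := by positivity
  rw [hermiteNorm, hermiteNorm, hfac, sqrt_mul (x := 2 * ((k : ℝ) + 1)) (by positivity),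
    mul_inv, ← mul_assoc, mul_inv_cancel₀ hpos.ne', one_mul]

lemma hasDerivAt_hermiteFn (k : ℕ) (x : ℝ) :
    HasDerivAt (hermiteFn k) (hermiteNorm k
      * ((derivative (physHermitePoly k)).eval x - x * (physHermitePoly k).eval x)
      * exp (-x ^ 2 / 2)) x := by
  have hsq : HasDerivAt (fun y : ℝ => -y ^ 2 / 2) (-x) x :=
    ((hasDerivAt_pow 2 x).neg.div_const 2).congr_deriv (by push_cast; ring)
  have hexp := hsq.exp
  rw [show hermiteFn k = _ from funext (hermiteFn_eq k)]
  exact ((((physHermitePoly k).hasDerivAt x).const_mul (hermiteNorm k)).fun_mul hexp).congr_deriv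
    (by ring)

lemma hasDerivAt_hermiteFn_raise (k : ℕ) (x : ℝ) :
    HasDerivAt (hermiteFn k) (x * hermiteFn k x - √(2 * (k + 1)) * hermiteFn (k + 1) x) x := by
  convert hasDerivAt_hermiteFn k x using 1
  rw [hermiteFn_eq, hermiteFn_eq, eval_physHermitePoly_succ, ← sqrt_mul_hermiteNorm_succ k]
  ring

lemma hasDerivAt_hermiteFn_lower (k : ℕ) (x : ℝ) :
    HasDerivAt (hermiteFn k) (-x * hermiteFn k x + √(2 * k) * hermiteFn (k - 1) x) x := by
  convert hasDerivAt_hermiteFn k x using 1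
  cases k with
  | zero => simp [hermiteFn_eq, physHermitePoly]; ring
  | succ k =>
    have hsq : √(2 * ((k : ℝ) + 1)) * √(2 * (k + 1)) = 2 * (k + 1) := mul_self_sqrt (by positivity)
    rw [hermiteFn_eq, hermiteFn_eq, derivative_physHermitePoly_succ, Nat.add_sub_cancel,
      ← sqrt_mul_hermiteNorm_succ k]
    simp only [eval_mul, eval_add, eval_natCast, eval_one, eval_ofNat]
    push_cast
    linear_combination (hermiteNorm (k + 1) * (physHermitePoly k).eval x * exp (-x ^ 2 / 2)) * hsq

lemma sqrt_mul_hermiteFn_succ (k : ℕ) (x : ℝ) :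
    √(2 * (k + 1)) * hermiteFn (k + 1) x
      = 2 * x * hermiteFn k x - √(2 * k) * hermiteFn (k - 1) x := by
  linarith [(hasDerivAt_hermiteFn_raise k x).unique (hasDerivAt_hermiteFn_lower k x)]

def IsLadderPair (a : ℝ) (f g : ℝ → ℝ) : Prop :=
  ∀ y, HasDerivAt f (y * f y - a * g y) y ∧ HasDerivAt g (-y * g y + a * f y) y

namespace IsLadderPair

variable {a : ℝ} {f g : ℝ → ℝ}

lemma hasDerivAt_christoffelDarboux (h : IsLadderPair a f g) {m : ℝ} (hm : a ^ 2 = 2 * m)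
    (x : ℝ) : HasDerivAt (fun y => m * f y ^ 2 + m * g y ^ 2 - a * y * f y * g y)
      (-a * f x * g x) x := by
  obtain ⟨hf, hg⟩ := h x
  refine ((((hf.pow 2).const_mul m).add ((hg.pow 2).const_mul m)).sub
    ((((hasDerivAt_id x).const_mul a).fun_mul hf).fun_mul hg)).congr_deriv ?_
  simp only [id]
  push_cast
  linear_combination (x * g x ^ 2 - x * f x ^ 2) * hm

theorem third_order_ode (h : IsLadderPair a f g) {ε : ℝ → ℝ} (hε : ∀ y, HasDerivAt ε (g y) y)
    (c x : ℝ) :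
    2 * iteratedDeriv 3 (fun y => c * f y * ε y) x
        + 2 * (a ^ 2 - 1 - x ^ 2) * deriv (fun y => c * f y * ε y) x - 4 * x * (c * f x * ε x)
      = 2 * c * ((1 - 6 * a ^ 2) * f x * g x + 3 * a * x * (f x ^ 2 + g x ^ 2)) := by
  set τ := fun y => c * f y * ε y
  set τ' := fun y => c * ((y * f y - a * g y) * ε y + f y * g y)
  set W := fun y => y * f y * g y - 2 * a * g y ^ 2 + a * f y ^ 2
  have hτ' : ∀ y, HasDerivAt τ (τ' y) y := fun y =>
    (((h y).1.const_mul c).fun_mul (hε y)).congr_deriv (by ring)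
  have hτ'' : ∀ y, HasDerivAt τ' (c * W y - (a ^ 2 - 1 - y ^ 2) * τ y) y := by
    intro y
    obtain ⟨hf, hg⟩ := h y
    exact (((((hasDerivAt_id y).fun_mul hf).sub (hg.const_mul a)).fun_mul (hε y)).add
      (hf.fun_mul hg)).const_mul c |>.congr_deriv (by simp only [id, Pi.sub_apply, τ, W]; ring)
  have hW : HasDerivAt W ((1 - 6 * a ^ 2) * f x * g x + 3 * a * x * (f x ^ 2 + g x ^ 2)) x := by
    obtain ⟨hf, hg⟩ := h x
    exact ((((hasDerivAt_id x).fun_mul hf).fun_mul hg).sub ((hg.pow 2).const_mul (2 * a))).add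
      ((hf.pow 2).const_mul a) |>.congr_deriv (by simp only [id]; push_cast; ring)
  have hq : HasDerivAt (fun y => a ^ 2 - 1 - y ^ 2) (-(2 * x)) x :=
    ((hasDerivAt_pow 2 x).const_sub (a ^ 2 - 1)).congr_deriv (by push_cast; ring)
  have hτ''' : HasDerivAt (fun y => c * W y - (a ^ 2 - 1 - y ^ 2) * τ y)
      (c * ((1 - 6 * a ^ 2) * f x * g x + 3 * a * x * (f x ^ 2 + g x ^ 2))
        - (-(2 * x) * τ x + (a ^ 2 - 1 - x ^ 2) * τ' x)) x :=
    (hW.const_mul c).sub (hq.fun_mul (hτ' x))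
  have h3 : iteratedDeriv 3 τ x = deriv (fun y => c * W y - (a ^ 2 - 1 - y ^ 2) * τ y) x := by
    rw [iteratedDeriv_succ, iteratedDeriv_succ, iteratedDeriv_one, funext fun y => (hτ' y).deriv,
      funext fun y => (hτ'' y).deriv]
  rw [h3, hτ'''.deriv, (hτ' x).deriv]
  ring

end IsLadderPair

lemma isLadderPair_hermiteFn (k : ℕ) :
    IsLadderPair √(2 * (k + 1)) (hermiteFn k) (hermiteFn (k + 1)) := fun y =>
  ⟨hasDerivAt_hermiteFn_raise k y, by simpa using hasDerivAt_hermiteFn_lower (k + 1) y⟩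

lemma pGUE_eq_christoffelDarboux (n : ℕ) (x : ℝ) :
    pGUE n x = n * hermiteFn (n - 1) x ^ 2 + n * hermiteFn n x ^ 2
      - √(2 * n) * x * hermiteFn (n - 1) x * hermiteFn n x := by
  induction n with
  | zero => simp [pGUE]
  | succ m ih =>
    rw [pGUE, Finset.sum_range_succ, ← pGUE, ih, Nat.add_sub_cancel]
    have ha : √(2 * (m : ℝ)) * √(2 * m) = 2 * m := mul_self_sqrt (by positivity)
    have hb : √(2 * ((m : ℝ) + 1)) * √(2 * (m + 1)) = 2 * (m + 1) := mul_self_sqrt (by positivity)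
    have hrec := sqrt_mul_hermiteFn_succ m x
    push_cast
    set a := √(2 * (m : ℝ))
    set b := √(2 * ((m : ℝ) + 1))
    set f := hermiteFn (m - 1) x
    set g := hermiteFn m x
    set h := hermiteFn (m + 1) x
    linear_combination (-(f ^ 2) / 2) * ha + (h ^ 2 / 2) * hb
      + (x * g - (2 * x * g - a * f) - (b * h - 2 * x * g + a * f) / 2) * hrec

lemma integrable_eval_mul_exp_neg_mul_sq (p : ℝ[X]) {b : ℝ} (hb : 0 < b) :
    Integrable fun x => p.eval x * exp (-b * x ^ 2) := by
  simp_rw [eval_eq_sum_range, Finset.sum_mul]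
  refine integrable_finsetSum _ fun i _ => ?_
  simp_rw [mul_assoc]
  refine Integrable.const_mul ?_ _
  simpa [rpow_natCast] using
    integrable_rpow_mul_exp_neg_mul_sq hb (s := i) (by linarith [i.cast_nonneg (α := ℝ)])

lemma integrable_hermiteFn (k : ℕ) : Integrable (hermiteFn k) := by
  have h := (integrable_eval_mul_exp_neg_mul_sq (physHermitePoly k) (b := 1 / 2)
    (by norm_num)).const_mul (hermiteNorm k)
  refine h.congr (Filter.Eventually.of_forall fun x => ?_)
  rw [hermiteFn_eq]
  ring_nf

lemma continuous_hermiteFn (k : ℕ) : Continuous (hermiteFn k) := by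
  rw [show hermiteFn k = _ from funext (hermiteFn_eq k)]
  fun_prop

lemma sign_sub_mul_eq_indicator (g : ℝ → ℝ) (x t : ℝ) :
    sign (x - t) * g t = (Set.Iio x).indicator g t - (Set.Ioi x).indicator g t := by
  rcases lt_trichotomy t x with h | rfl | h
  · simp [h, h.not_gt, sign_of_pos (sub_pos.2 h)]
  · simp
  · simp [h, h.not_gt, sign_of_neg (sub_neg.2 h)]

lemma half_integral_sign_sub_mul {g : ℝ → ℝ} (hg : Integrable g) (x : ℝ) :
    (1 / 2) * ∫ t, sign (x - t) * g t = (∫ t in Set.Iic x, g t) - (1 / 2) * ∫ t, g t := by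
  have hsplit := integral_add_compl (measurableSet_Iic (a := x)) hg
  rw [Set.compl_Iic] at hsplit
  simp_rw [sign_sub_mul_eq_indicator g x]
  rw [integral_sub (hg.indicator measurableSet_Iio) (hg.indicator measurableSet_Ioi),
    integral_indicator measurableSet_Iio, integral_indicator measurableSet_Ioi,
    ← integral_Iic_eq_integral_Iio]
  linarith

lemma hasDerivAt_integral_Iic {g : ℝ → ℝ} (hg : Integrable g) {x : ℝ} (hgx : ContinuousAt g x) :
    HasDerivAt (fun y => ∫ t in Set.Iic y, g t) (g x) x := by
  have hsplit : (fun y => ∫ t in Set.Iic y, g t)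
      = fun y => (∫ t in (0 : ℝ)..y, g t) + ∫ t in Set.Iic 0, g t := funext fun y => by
    rw [← intervalIntegral.integral_Iic_sub_Iic hg.integrableOn hg.integrableOn]
    ring
  rw [hsplit]
  exact (intervalIntegral.integral_hasDerivAt_right hg.intervalIntegrable
    hg.aestronglyMeasurable.stronglyMeasurableAtFilter hgx).add_const _

lemma hasDerivAt_half_integral_sign_sub_mul {g : ℝ → ℝ} (hg : Integrable g) {x : ℝ}
    (hgx : ContinuousAt g x) :
    HasDerivAt (fun y => (1 / 2) * ∫ t, sign (y - t) * g t) (g x) x := by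
  simp_rw [half_integral_sign_sub_mul hg]
  exact (hasDerivAt_integral_Iic hg hgx).sub_const _

theorem tau_ode (n : ℕ) (hn : 1 ≤ n) (x : ℝ) :
    2 * iteratedDeriv 3 (tauFn n) x + 2*(2*n - 1 - x^2) * deriv (tauFn n) x
        - 4*x * tauFn n x =
      (12*n - 1 - 6*x^2) * deriv (pGUE n) x + 6*x * pGUE n x := by
  obtain ⟨m, rfl⟩ := Nat.exists_eq_add_of_le' hn
  have hpair := isLadderPair_hermiteFn m
  have ha : √(2 * ((m : ℝ) + 1)) ^ 2 = 2 * ((m : ℝ) + 1) := sq_sqrt (by positivity)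
  have hc : 2 * √(((m + 1 : ℕ) : ℝ) / 2) = √(2 * ((m : ℝ) + 1)) := by
    rw [show 2 * ((m : ℝ) + 1) = 2 ^ 2 * (((m + 1 : ℕ) : ℝ) / 2) by push_cast; ring,
      sqrt_mul (by positivity), sqrt_sq zero_le_two]
  have hode := hpair.third_order_ode
    (fun y => hasDerivAt_half_integral_sign_sub_mul (integrable_hermiteFn (m + 1))
      (continuous_hermiteFn (m + 1)).continuousAt) √(((m + 1 : ℕ) : ℝ) / 2) x
  have hp : pGUE (m + 1) = fun y => ((m : ℝ) + 1) * hermiteFn m y ^ 2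
      + ((m : ℝ) + 1) * hermiteFn (m + 1) y ^ 2
      - √(2 * ((m : ℝ) + 1)) * y * hermiteFn m y * hermiteFn (m + 1) y := funext fun y => by
    rw [pGUE_eq_christoffelDarboux]; push_cast; simp
  have hτ : tauFn (m + 1) = fun y => √(((m + 1 : ℕ) : ℝ) / 2) * hermiteFn m y
      * ((1 / 2) * ∫ t, sign (y - t) * hermiteFn (m + 1) t) := rfl
  rw [hτ, hp, (hpair.hasDerivAt_christoffelDarboux ha x).deriv]
  rw [ha, hc] at hode
  push_cast at hode ⊢
  linear_combination hode + 3 * x * (hermiteFn m x ^ 2 + hermiteFn (m + 1) x ^ 2) * ha
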